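/- arXiv:1904.09690 — 2 statements merged into one kernel-verified Lean document; each statement's English description precedes it below -/
import Mathlib

section
/- Let Σ ∪ {∅} be a metric space with distance d. For strings x, y ∈ Σⁿ, define the padded strings p(x) = ∅x₁∅x₂∅⋯xₙ∅ and p(y) similarly. Then dtw(p(x), p(y)) = ed(x, y), where ed is the edit distance with insertion/deletion cost d(∅, l) for letter l and substitution cost d(l, l'). -/
open scoped BigOperators

variable {α : Type*}

/-- `xb` is the expansion of `x` obtained by replacing the `i`-th letter of `x`
with `ks[i] ≥ 1` consecutive copies of itself (equivalently, by extending runs). -/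
def IsExpansionWith (x : List α) (ks : List ℕ) (xb : List α) : Prop :=
  ks.length = x.length ∧ (∀ k ∈ ks, 1 ≤ k) ∧
    xb = (x.zip ks).flatMap fun p => List.replicate p.2 p.1

/-- `xb` is an expansion of `x` (obtained by extending runs). -/
def IsExpansion (x xb : List α) : Prop := ∃ ks, IsExpansionWith x ks xb

/-- The cost of a correspondence: sum of pointwise distances. -/
def corrCost (d : α → α → ℝ) (xb yb : List α) : ℝ :=
  ((xb.zip yb).map fun p => d p.1 p.2).sum

/-- A correspondence between `x` and `y`: a pair of equal-length expansions. -/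
def IsCorrespondence (x y xb yb : List α) : Prop :=
  IsExpansion x xb ∧ IsExpansion y yb ∧ xb.length = yb.length

/-- Dynamic time warping distance: minimum cost of a correspondence. -/
noncomputable def dtw (d : α → α → ℝ) (x y : List α) : ℝ :=
  sInf {c | ∃ xb yb, IsCorrespondence x y xb yb ∧ c = corrCost d xb yb}

/-- The maximal runs of equal letters of a list. -/
def runsOf [DecidableEq α] (x : List α) : List (List α) := x.splitBy (· == ·)

/-- Number of runs. -/
def numRuns [DecidableEq α] (x : List α) : ℕ := (runsOf x).length

/-- Length of the final run. -/
def lastRunLen [DecidableEq α] (x : List α) : ℕ := ((runsOf x).getLastD []).length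

/-- Length of the `i`-th run (0-indexed). -/
def runLen [DecidableEq α] (x : List α) (i : ℕ) : ℕ := ((runsOf x).getD i []).length

/-- The letter populating the `i`-th run (0-indexed). -/
def runLetter [DecidableEq α] [Inhabited α] (x : List α) (i : ℕ) : α :=
  ((runsOf x).getD i []).headI

/-- The concatenation of the first `k` runs of `x`. -/
def firstRuns [DecidableEq α] (k : ℕ) (x : List α) : List α := ((runsOf x).take k).flatten

/-- The prefix of `y` consisting of its first `ry` runs, up through the `oy`-th
letter of the `ry`-th run (runs are 1-indexed here). -/
def runPrefix [DecidableEq α] (ry oy : ℕ) (y : List α) : List α :=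
  firstRuns (ry - 1) y ++ ((runsOf y).getD (ry - 1) []).take oy

/-- The subproblem `SP(x, y, rx, ry, oy)`: the minimum cost of a correspondence
between the first `rx` runs of `x` and the prefix of `y` ending at the `oy`-th
letter of its `ry`-th run, under the constraint that the final (`ry`-th) run of
the `y`-prefix is not extended; `⊤` if no such correspondence exists. -/
noncomputable def SP [DecidableEq α] (d : α → α → ℝ) (x y : List α) (rx ry oy : ℕ) : EReal :=
  sInf ((fun p : List α × List α => ((corrCost d p.1 p.2 : ℝ) : EReal)) ''
    {p | IsCorrespondence (firstRuns rx x) (runPrefix ry oy y) p.1 p.2 ∧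
         (0 < oy → lastRunLen p.2 = oy)})

/-- Generalized edit distance over a metric with null character `nul`:
insertion/deletion of `l` costs `d nul l`, substitution of `l` by `l'` costs `d l l'`. -/
noncomputable def ged (d : α → α → ℝ) (nul : α) : List α → List α → ℝ
  | [], [] => 0
  | [], b :: ys => d nul b + ged d nul [] ys
  | a :: xs, [] => d nul a + ged d nul xs []
  | a :: xs, b :: ys =>
      min (d a b + ged d nul xs ys)
        (min (d nul a + ged d nul xs (b :: ys)) (d nul b + ged d nul (a :: xs) ys))
  termination_by x y => x.length + y.length

/-- Simple (Hamming/Levenshtein) edit distance: unit-cost insertions, deletions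
and substitutions. -/
def edH [DecidableEq α] : List α → List α → ℕ
  | [], ys => ys.length
  | xs, [] => xs.length
  | a :: xs, b :: ys =>
      min ((if a = b then 0 else 1) + edH xs ys)
        (min (1 + edH xs (b :: ys)) (1 + edH (a :: xs) ys))
  termination_by x y => x.length + y.length

/-- Simple edit distance with only unit-cost insertions and deletions. -/
def edS [DecidableEq α] : List α → List α → ℕ
  | [], ys => ys.length
  | xs, [] => xs.length
  | a :: xs, b :: ys =>
      if a = b then
        min (edS xs ys) (min (1 + edS xs (b :: ys)) (1 + edS (a :: xs) ys))
      else
        min (1 + edS xs (b :: ys)) (1 + edS (a :: xs) ys)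
  termination_by x y => x.length + y.length

/-- The padded string `p(x) = ∅ x₁ ∅ x₂ ∅ ⋯ xₙ ∅`. -/
def pad (nul : α) (x : List α) : List α := nul :: x.flatMap fun a => [a, nul]

/-- The `r`-simplification for edit distance: remove all letters of magnitude at most `r`. -/
noncomputable def sEd [MetricSpace α] (nul : α) (r : ℝ) (x : List α) : List α :=
  x.filter fun l => decide (r < dist nul l)

/-! The suffixes of a padded string `p(x)` are the strings `p(u)` and `a :: p(u)` for suffixes
`a :: u` of `x`, so a warping path between `p(x)` and `p(y)` walks through pairs of such
positions. Each edit operation is realised by two steps of a path: a substitution of `a` by `b`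
matches `∅a` with `∅b`, a deletion of `a` matches `∅a` with a repeated `∅`. Conversely, a
potential on pairs of positions that equals `ed(x, y)` at the start and drops by at most the cost
of each step (a sub-solution of the Bellman equation of `dtw`) bounds the cost of every path
from below; the triangle inequality `d(∅, b) ≤ d(∅, a) + d(a, b)` is what makes the potential drop
slowly enough when a letter is matched with a letter on one side and with a `∅` on the other. -/

theorem isExpansion_nil_left {xb : List α} : IsExpansion [] xb ↔ xb = [] := by
  constructor
  · rintro ⟨ks, -, -, rfl⟩
    simp
  · rintro rfl
    exact ⟨[], rfl, by simp, rfl⟩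

theorem isExpansion_cons_left {a : α} {u xb : List α} :
    IsExpansion (a :: u) xb ↔
      ∃ xb', xb = a :: xb' ∧ (IsExpansion u xb' ∨ IsExpansion (a :: u) xb') := by
  constructor
  · rintro ⟨_ | ⟨k, ks⟩, hlen, hpos, rfl⟩
    · simp at hlen
    obtain ⟨k, rfl⟩ := Nat.exists_eq_add_of_le' (hpos k (by simp))
    have hks : ks.length = u.length := by simpa using hlen
    have hpos' : ∀ m ∈ ks, 1 ≤ m := fun m hm => hpos m (by simp [hm])
    rcases Nat.eq_zero_or_pos k with rfl | hk
    · exact ⟨_, by simp, .inl ⟨ks, hks, hpos', rfl⟩⟩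
    · refine ⟨List.replicate k a ++ (u.zip ks).flatMap fun p => List.replicate p.2 p.1,
        by simp [List.replicate_succ], .inr ⟨k :: ks, by simp [hks], ?_, by simp⟩⟩
      simpa [Nat.one_le_iff_ne_zero, hk.ne'] using hpos'
  · rintro ⟨xb', rfl, ⟨ks, hlen, hpos, rfl⟩ | ⟨_ | ⟨k, ks⟩, hlen, hpos, rfl⟩⟩
    · exact ⟨1 :: ks, by simp [hlen], by simpa using hpos, by simp⟩
    · simp at hlen
    · refine ⟨(k + 1) :: ks, by simpa using hlen, ?_, by simp [List.replicate_succ]⟩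
      simp only [List.mem_cons, forall_eq_or_imp] at hpos ⊢
      exact ⟨by omega, hpos.2⟩

theorem IsExpansion.eq_nil_iff {x xb : List α} (h : IsExpansion x xb) : xb = [] ↔ x = [] := by
  rcases x with _ | ⟨a, u⟩
  · simpa using isExpansion_nil_left.1 h
  · obtain ⟨xb', rfl, -⟩ := isExpansion_cons_left.1 h
    simp

theorem IsCorrespondence.eq_nil_iff {s t xb yb : List α} (h : IsCorrespondence s t xb yb) :
    s = [] ↔ t = [] := by
  rw [← h.1.eq_nil_iff, ← h.2.1.eq_nil_iff, ← List.length_eq_zero_iff, h.2.2,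
    List.length_eq_zero_iff]

theorem isCorrespondence_cons_cons {a b : α} {u v xb yb : List α} :
    IsCorrespondence (a :: u) (b :: v) xb yb ↔
      ∃ u' v' xb' yb', xb = a :: xb' ∧ yb = b :: yb' ∧ (u' = u ∨ u' = a :: u) ∧
        (v' = v ∨ v' = b :: v) ∧ IsCorrespondence u' v' xb' yb' := by
  constructor
  · rintro ⟨hx, hy, hlen⟩
    obtain ⟨xb', rfl, hx'⟩ := isExpansion_cons_left.1 hx
    obtain ⟨yb', rfl, hy'⟩ := isExpansion_cons_left.1 hy
    have hlen' : xb'.length = yb'.length := by simpa using hlen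
    rcases hx' with hx' | hx' <;> rcases hy' with hy' | hy'
    exacts [⟨u, v, xb', yb', rfl, rfl, .inl rfl, .inl rfl, ⟨hx', hy', hlen'⟩⟩,
      ⟨u, _, xb', yb', rfl, rfl, .inl rfl, .inr rfl, ⟨hx', hy', hlen'⟩⟩,
      ⟨_, v, xb', yb', rfl, rfl, .inr rfl, .inl rfl, ⟨hx', hy', hlen'⟩⟩,
      ⟨_, _, xb', yb', rfl, rfl, .inr rfl, .inr rfl, ⟨hx', hy', hlen'⟩⟩]
  · rintro ⟨u', v', xb', yb', rfl, rfl, hu, hv, hx, hy, hlen⟩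
    refine ⟨isExpansion_cons_left.2 ⟨xb', rfl, ?_⟩, isExpansion_cons_left.2 ⟨yb', rfl, ?_⟩,
      by simp [hlen]⟩
    · rcases hu with rfl | rfl
      exacts [.inl hx, .inr hx]
    · rcases hv with rfl | rfl
      exacts [.inl hy, .inr hy]

theorem IsCorrespondence.cons {a b : α} {u v u' v' xb yb : List α}
    (h : IsCorrespondence u' v' xb yb) (hu : u' = u ∨ u' = a :: u) (hv : v' = v ∨ v' = b :: v) :
    IsCorrespondence (a :: u) (b :: v) (a :: xb) (b :: yb) :=
  isCorrespondence_cons_cons.2 ⟨u', v', xb, yb, rfl, rfl, hu, hv, h⟩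

theorem corrCost_nil_left (d : α → α → ℝ) (yb : List α) : corrCost d [] yb = 0 := by
  simp [corrCost]

theorem corrCost_cons_cons (d : α → α → ℝ) (a b : α) (xb yb : List α) :
    corrCost d (a :: xb) (b :: yb) = d a b + corrCost d xb yb := by
  simp [corrCost]

section Ged

variable (d : α → α → ℝ) (nul : α)

theorem ged_nil_nil : ged d nul [] [] = 0 := by
  rw [ged]

theorem ged_nil_cons (b : α) (ys : List α) :
    ged d nul [] (b :: ys) = d nul b + ged d nul [] ys := by
  rw [ged]

theorem ged_cons_nil (a : α) (xs : List α) :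
    ged d nul (a :: xs) [] = d nul a + ged d nul xs [] := by
  rw [ged]

theorem ged_cons_cons (a b : α) (xs ys : List α) :
    ged d nul (a :: xs) (b :: ys) =
      min (d a b + ged d nul xs ys)
        (min (d nul a + ged d nul xs (b :: ys)) (d nul b + ged d nul (a :: xs) ys)) := by
  rw [ged]

theorem ged_cons_cons_le (a b : α) (xs ys : List α) :
    ged d nul (a :: xs) (b :: ys) ≤ d a b + ged d nul xs ys := by
  rw [ged_cons_cons]
  exact min_le_left _ _

theorem ged_cons_left_le (a : α) (xs ys : List α) :
    ged d nul (a :: xs) ys ≤ d nul a + ged d nul xs ys := by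
  rcases ys with _ | ⟨b, ys⟩
  · rw [ged_cons_nil]
  · rw [ged_cons_cons]
    exact (min_le_right _ _).trans (min_le_left _ _)

theorem ged_cons_right_le (b : α) (xs ys : List α) :
    ged d nul xs (b :: ys) ≤ d nul b + ged d nul xs ys := by
  rcases xs with _ | ⟨a, xs⟩
  · rw [ged_nil_cons]
  · rw [ged_cons_cons]
    exact (min_le_right _ _).trans (min_le_right _ _)

end Ged

section Potential

variable {σ : Type*} (d : α → α → ℝ) (word : σ → List α) (head : σ → α) (next : σ → Option σ)
  (Φ : σ → σ → ℝ)

theorem le_corrCost_of_potential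
    (hword : ∀ s, word s = head s :: (next s).elim [] word)
    (hend : ∀ s t, next s = none → next t = none → Φ s t ≤ d (head s) (head t))
    (hstep : ∀ s t s' t', (s' = s ∨ next s = some s') → (t' = t ∨ next t = some t') →
      Φ s t ≤ d (head s) (head t) + Φ s' t')
    {xb : List α} : ∀ {s t : σ} {yb : List α},
      IsCorrespondence (word s) (word t) xb yb → Φ s t ≤ corrCost d xb yb := by
  have hword_ne_nil (s : σ) : word s ≠ [] := by simp [hword s]
  have hsucc (s : σ) (u : List α) (hu : u = (next s).elim [] word ∨ u = word s) :
      (u = [] ∧ next s = none) ∨ ∃ s', (s' = s ∨ next s = some s') ∧ u = word s' := by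
    rcases hu with rfl | rfl
    · cases next s with
      | none => exact .inl ⟨rfl, rfl⟩
      | some s' => exact .inr ⟨s', .inr rfl, rfl⟩
    · exact .inr ⟨s, .inl rfl, rfl⟩
  induction xb with
  | nil =>
    intro s t yb h
    exact absurd (h.1.eq_nil_iff.1 rfl) (hword_ne_nil s)
  | cons c xb ih =>
    intro s t yb h
    rw [hword s, hword t] at h
    obtain ⟨u, v, xb', yb', hxb, rfl, hu, hv, h'⟩ := isCorrespondence_cons_cons.1 h
    obtain ⟨rfl, rfl⟩ := List.cons.inj hxb
    rw [corrCost_cons_cons]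
    rw [← hword] at hu hv
    rcases hsucc s u hu with ⟨rfl, hs⟩ | ⟨s', hs', rfl⟩ <;>
      rcases hsucc t v hv with ⟨rfl, ht⟩ | ⟨t', ht', rfl⟩
    · rw [h'.1.eq_nil_iff.2 rfl, corrCost_nil_left, add_zero]
      exact hend s t hs ht
    · exact absurd (h'.eq_nil_iff.1 rfl) (hword_ne_nil t')
    · exact absurd (h'.eq_nil_iff.2 rfl) (hword_ne_nil s')
    · exact (hstep s t s' t' hs' ht').trans (add_le_add_right (ih h') _)

end Potential

theorem pad_nil (nul : α) : pad nul [] = [nul] := rfl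

theorem pad_cons (nul a : α) (u : List α) : pad nul (a :: u) = nul :: a :: pad nul u := by
  simp [pad]

inductive PadPos (α : Type*) where
  | gap (x : List α)
  | letter (a : α) (u : List α)

namespace PadPos

variable (nul : α)

def word : PadPos α → List α
  | gap x => pad nul x
  | letter a u => a :: pad nul u

def head : PadPos α → α
  | gap _ => nul
  | letter a _ => a

def next : PadPos α → Option (PadPos α)
  | gap [] => none
  | gap (a :: u) => some (letter a u)
  | letter _ u => some (gap u)

theorem word_eq (s : PadPos α) : word nul s = head nul s :: (next s).elim [] (word nul) := by
  rcases s with (_ | ⟨a, u⟩) | ⟨a, u⟩ <;> simp [word, head, next, pad_cons, pad_nil]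

variable [PseudoMetricSpace α]

/-- The pending letter `a` of `letter a u` may end up matched with a `∅` or with letters of the
other side, whence the maximum of two edit distances. -/
noncomputable def potential : PadPos α → PadPos α → ℝ
  | gap x, gap y => ged dist nul x y
  | letter a u, gap y => max (ged dist nul (a :: u) y) (ged dist nul u y)
  | gap x, letter b v => max (ged dist nul x (b :: v)) (ged dist nul x v)
  | letter a u, letter b v => dist a b + ged dist nul u v

theorem potential_end (s t : PadPos α) (hs : next s = none) (ht : next t = none) :
    potential nul s t ≤ dist (head nul s) (head nul t) := by
  rcases s with (_ | ⟨a, u⟩) | ⟨a, u⟩ <;> rcases t with (_ | ⟨b, v⟩) | ⟨b, v⟩ <;>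
    simp_all [next, potential, head, ged_nil_nil]

theorem potential_step (s t s' t' : PadPos α) (hs : s' = s ∨ next s = some s')
    (ht : t' = t ∨ next t = some t') :
    potential nul s t ≤ dist (head nul s) (head nul t) + potential nul s' t' := by
  have hdel (a b : α) (u v : List α) :
      ged dist nul (a :: u) v ≤ dist nul b + (dist a b + ged dist nul u v) := by
    linarith [ged_cons_left_le dist nul a u v, dist_triangle nul b a, dist_comm a b]
  have hins (a b : α) (u v : List α) :
      ged dist nul u (b :: v) ≤ dist a nul + (dist a b + ged dist nul u v) := by
    linarith [ged_cons_right_le dist nul b u v, dist_triangle nul a b, dist_comm a nul]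
  rcases s with (_ | ⟨a, u⟩) | ⟨a, u⟩ <;> rcases t with (_ | ⟨b, v⟩) | ⟨b, v⟩ <;>
    rcases hs with rfl | hs <;> rcases ht with rfl | ht <;>
    (try simp only [next, Option.some.injEq, reduceCtorEq] at *) <;> subst_vars <;>
    simp only [potential, head, dist_self, zero_add, max_le_iff]
  all_goals grind [ged_cons_cons_le, ged_cons_left_le, ged_cons_right_le, dist_comm, dist_nonneg]

end PadPos

theorem ged_le_corrCost_pad [PseudoMetricSpace α] {nul : α} {x y xb yb : List α}
    (h : IsCorrespondence (pad nul x) (pad nul y) xb yb) : ged dist nul x y ≤ corrCost dist xb yb :=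
  le_corrCost_of_potential dist (PadPos.word nul) (PadPos.head nul) PadPos.next
    (PadPos.potential nul) (PadPos.word_eq nul) (PadPos.potential_end nul)
    (PadPos.potential_step nul) (s := .gap x) (t := .gap y) h

section PadCorrespondence

variable {nul : α} {u v xb yb : List α}

theorem IsCorrespondence.pad_cons_cons
    (h : IsCorrespondence (pad nul u) (pad nul v) xb yb) (a b : α) :
    IsCorrespondence (pad nul (a :: u)) (pad nul (b :: v)) (nul :: a :: xb) (nul :: b :: yb) := by
  rw [pad_cons, pad_cons]
  exact (h.cons (.inl rfl) (.inl rfl)).cons (.inl rfl) (.inl rfl)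

theorem IsCorrespondence.pad_cons_left
    (h : IsCorrespondence (pad nul u) (pad nul v) xb yb) (a : α) :
    IsCorrespondence (pad nul (a :: u)) (pad nul v) (nul :: a :: xb) (nul :: nul :: yb) := by
  rw [pad_cons]
  exact (h.cons (.inl rfl) (.inr rfl)).cons (.inl rfl) (.inr rfl)

theorem IsCorrespondence.pad_cons_right
    (h : IsCorrespondence (pad nul u) (pad nul v) xb yb) (b : α) :
    IsCorrespondence (pad nul u) (pad nul (b :: v)) (nul :: nul :: xb) (nul :: b :: yb) := by
  rw [pad_cons]
  exact (h.cons (.inr rfl) (.inl rfl)).cons (.inr rfl) (.inl rfl)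

end PadCorrespondence

theorem exists_isCorrespondence_pad_corrCost_le [PseudoMetricSpace α] (nul : α) (x y : List α) :
    ∃ xb yb, IsCorrespondence (pad nul x) (pad nul y) xb yb ∧
      corrCost dist xb yb ≤ ged dist nul x y := by
  induction x, y using ged.induct with
  | case1 =>
    refine ⟨[nul], [nul], ?_, by simp [corrCost, ged_nil_nil]⟩
    exact IsCorrespondence.cons (u' := []) (v' := []) ⟨isExpansion_nil_left.2 rfl,
      isExpansion_nil_left.2 rfl, rfl⟩ (.inl rfl) (.inl rfl)
  | case2 b ys ih =>
    obtain ⟨xb, yb, h, hc⟩ := ih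
    refine ⟨_, _, h.pad_cons_right b, ?_⟩
    simp only [corrCost_cons_cons, ged_nil_cons, dist_self]
    linarith
  | case3 a xs ih =>
    obtain ⟨xb, yb, h, hc⟩ := ih
    refine ⟨_, _, h.pad_cons_left a, ?_⟩
    simp only [corrCost_cons_cons, ged_cons_nil, dist_self, dist_comm a nul]
    linarith
  | case4 a xs b ys ihs ihd ihi =>
    rw [ged_cons_cons]
    obtain ⟨xb, yb, h, hc⟩ := ihs
    obtain ⟨xb', yb', h', hc'⟩ := ihd
    obtain ⟨xb'', yb'', h'', hc''⟩ := ihi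
    rcases min_choice (dist a b + ged dist nul xs ys) (min (dist nul a + ged dist nul xs (b :: ys))
        (dist nul b + ged dist nul (a :: xs) ys)) with hm | hm <;> rw [hm]
    · refine ⟨_, _, h.pad_cons_cons a b, ?_⟩
      simp only [corrCost_cons_cons, dist_self]
      linarith
    rcases min_choice (dist nul a + ged dist nul xs (b :: ys))
      (dist nul b + ged dist nul (a :: xs) ys) with hm | hm <;> rw [hm]
    · refine ⟨_, _, h'.pad_cons_left a, ?_⟩
      simp only [corrCost_cons_cons, dist_self, dist_comm a nul]
      linarith
    · refine ⟨_, _, h''.pad_cons_right b, ?_⟩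
      simp only [corrCost_cons_cons, dist_self]
      linarith

theorem stmt3_general [MetricSpace α] (nul : α) (x y : List α) :
    dtw dist (pad nul x) (pad nul y) = ged dist nul x y := by
  obtain ⟨xb, yb, h, hle⟩ := exists_isCorrespondence_pad_corrCost_le nul x y
  refine IsLeast.csInf_eq ⟨⟨xb, yb, h, (hle.antisymm (ged_le_corrCost_pad h)).symm⟩, ?_⟩
  rintro c ⟨xb', yb', h', rfl⟩
  exact ged_le_corrCost_pad h'

/-- `dtw(p(x), p(y)) = ed(x, y)` for the padded strings over a metric with null
character `nul`. -/
theorem stmt3 [MetricSpace α] (nul : α) (n : ℕ) (x y : List α)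
    (hx : x.length = n) (hy : y.length = n)
    (hxn : ∀ l ∈ x, l ≠ nul) (hyn : ∀ l ∈ y, l ≠ nul) :
    dtw dist (pad nul x) (pad nul y) = ged dist nul x y :=
  stmt3_general nul x y
end

section
/- Let T be a well-separated tree metric over Σ and let s_r denote the r-simplification. For any strings x, y ∈ Σⁿ, dtw(s_r(x), s_r(y)) ≤ dtw(x, y). Consequently, for all α, if dtw(x, y) ≤ nr/α then dtw(s_r(x), s_r(y)) ≤ nr/α. -/
open scoped BigOperators

variable {α : Type*}

/-- A well-separated tree metric: a rooted edge-weighted tree (given by a parent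
function) over the alphabet `σ`, with positive edge weights that are
nonincreasing along every root-to-leaf path. `weight v` is the weight of the
edge from `v` to its parent. -/
structure WSTree (σ : Type*) where
  root : σ
  parent : σ → σ
  weight : σ → ℝ
  parent_root : parent root = root
  weight_pos : ∀ v, v ≠ root → 0 < weight v
  weight_mono : ∀ v, v ≠ root → parent v ≠ root → weight v ≤ weight (parent v)
  to_root : ∀ v, ∃ n, parent^[n] v = root

namespace WSTree

variable {σ : Type*}

/-- The edges (identified by their lower endpoint) on the path from `u` to the root. -/
def ancEdges (T : WSTree σ) (u : σ) : Set σ :=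
  {w | w ≠ T.root ∧ ∃ k, T.parent^[k] u = w}

/-- The tree-metric distance: the maximum weight of an edge on the (unique simple)
path from `u` to `v` (the edges of which form the symmetric difference of the
two root-paths), and `0` if `u = v`. -/
noncomputable def dist (T : WSTree σ) (u v : σ) : ℝ :=
  sSup (T.weight '' (symmDiff (T.ancEdges u) (T.ancEdges v)))

/-- `a` is the `r`-simplification of the letter `l`: the highest ancestor of `l`
reachable from `l` using only edges of weight at most `r / 4`. -/
def IsSimp (T : WSTree σ) (r : ℝ) (l a : σ) : Prop :=
  (∃ k, T.parent^[k] l = a ∧ ∀ j < k, T.weight (T.parent^[j] l) ≤ r / 4) ∧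
    (a = T.root ∨ r / 4 < T.weight a)

end WSTree

/-! Simplification can only shorten tree distances. An edge above `s_r(u)` weighs more than
`r / 4`, since weights do not decrease towards the root, and it lies above `u` as well;
conversely an edge above `u` of weight more than `r / 4` lies above `s_r(u)`. So the path from
`s_r(u)` to `s_r(v)` uses only edges of the path from `u` to `v`, and
`d(s_r(u), s_r(v)) ≤ d(u, v)`. Applying `s_r` letterwise to any correspondence of `x` and `y`
then gives a correspondence of `s_r(x)` and `s_r(y)` of no larger cost. -/

namespace WSTree

variable {σ : Type*} (T : WSTree σ)

theorem iterate_parent_root (k : ℕ) : T.parent^[k] T.root = T.root := by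
  induction k with
  | zero => rfl
  | succ k ih => rw [Function.iterate_succ_apply', ih, T.parent_root]

theorem weight_le_weight_iterate_parent (a : σ) (k : ℕ) (h : T.parent^[k] a ≠ T.root) :
    T.weight a ≤ T.weight (T.parent^[k] a) := by
  induction k with
  | zero => exact le_rfl
  | succ k ih =>
    rw [Function.iterate_succ_apply'] at h ⊢
    have hk : T.parent^[k] a ≠ T.root := fun hk => h (by rw [hk, T.parent_root])
    exact (ih hk).trans (T.weight_mono _ hk h)

theorem ancEdges_finite (u : σ) : (T.ancEdges u).Finite := by
  obtain ⟨n, hn⟩ := T.to_root u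
  refine ((Set.finite_Iio n).image fun k => T.parent^[k] u).subset ?_
  rintro w ⟨hw, k, rfl⟩
  refine ⟨k, Set.mem_Iio.mpr (not_le.mp fun hnk => hw ?_), rfl⟩
  rw [← Nat.sub_add_cancel hnk, Function.iterate_add_apply, hn, T.iterate_parent_root]

theorem dist_nonneg (u v : σ) : 0 ≤ T.dist u v := by
  refine Real.sSup_nonneg ?_
  rintro _ ⟨w, hw, rfl⟩
  obtain ⟨⟨hwr, -⟩, -⟩ | ⟨⟨hwr, -⟩, -⟩ := Set.mem_symmDiff.mp hw
  all_goals exact (T.weight_pos w hwr).le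

variable {T} {r : ℝ} {s : σ → σ}

theorem mem_ancEdges_of_mem_ancEdges_simp (hs : ∀ l, T.IsSimp r l (s l)) {u w : σ}
    (hw : w ∈ T.ancEdges (s u)) : w ∈ T.ancEdges u ∧ r / 4 < T.weight w := by
  obtain ⟨hwr, j, rfl⟩ := hw
  obtain ⟨⟨k, hk, -⟩, hsu⟩ := hs u
  have hsu_ne : s u ≠ T.root := fun h => hwr (by rw [h, T.iterate_parent_root])
  refine ⟨⟨hwr, j + k, by rw [Function.iterate_add_apply, hk]⟩, ?_⟩
  exact (hsu.resolve_left hsu_ne).trans_le (T.weight_le_weight_iterate_parent _ j hwr)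

theorem mem_ancEdges_simp_of_lt_weight (hs : ∀ l, T.IsSimp r l (s l)) {u w : σ}
    (hw : w ∈ T.ancEdges u) (hlt : r / 4 < T.weight w) : w ∈ T.ancEdges (s u) := by
  obtain ⟨hwr, m, rfl⟩ := hw
  obtain ⟨⟨k, hk, hlight⟩, -⟩ := hs u
  have hkm : k ≤ m := not_lt.mp fun hmk => (hlight m hmk).not_gt hlt
  refine ⟨hwr, m - k, ?_⟩
  rw [← hk, ← Function.iterate_add_apply, Nat.sub_add_cancel hkm]

theorem symmDiff_ancEdges_simp_subset (hs : ∀ l, T.IsSimp r l (s l)) (u v : σ) :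
    symmDiff (T.ancEdges (s u)) (T.ancEdges (s v)) ⊆ symmDiff (T.ancEdges u) (T.ancEdges v) := by
  intro w hw
  rw [Set.mem_symmDiff] at hw ⊢
  rcases hw with ⟨hu, hv⟩ | ⟨hv, hu⟩
  · obtain ⟨hu, hlt⟩ := mem_ancEdges_of_mem_ancEdges_simp hs hu
    exact Or.inl ⟨hu, fun hv' => hv (mem_ancEdges_simp_of_lt_weight hs hv' hlt)⟩
  · obtain ⟨hv, hlt⟩ := mem_ancEdges_of_mem_ancEdges_simp hs hv
    exact Or.inr ⟨hv, fun hu' => hu (mem_ancEdges_simp_of_lt_weight hs hu' hlt)⟩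

theorem dist_simp_le (hs : ∀ l, T.IsSimp r l (s l)) (u v : σ) :
    T.dist (s u) (s v) ≤ T.dist u v := by
  obtain h | h := (T.weight '' symmDiff (T.ancEdges (s u)) (T.ancEdges (s v))).eq_empty_or_nonempty
  · rw [dist, h, Real.sSup_empty]
    exact T.dist_nonneg u v
  · have hfin := ((T.ancEdges_finite u).symmDiff (T.ancEdges_finite v)).image T.weight
    exact csSup_le_csSup hfin.bddAbove h
      (Set.image_mono (symmDiff_ancEdges_simp_subset hs u v))

end WSTree

section Expansion

variable {α β : Type*} (s : α → β) {x y : List α} {ks : List ℕ}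

theorem IsExpansionWith.map {xb : List α} (h : IsExpansionWith x ks xb) :
    IsExpansionWith (x.map s) ks (xb.map s) := by
  obtain ⟨hlen, hpos, rfl⟩ := h
  refine ⟨by rw [List.length_map, hlen], hpos, ?_⟩
  rw [List.zip_map_left, List.map_flatMap, List.flatMap_map]
  simp

theorem IsExpansionWith.exists_of_map {xb' : List β} (h : IsExpansionWith (x.map s) ks xb') :
    ∃ xb, IsExpansionWith x ks xb ∧ xb.map s = xb' := by
  obtain ⟨hlen, hpos, hxb'⟩ := h
  have hx : IsExpansionWith x ks ((x.zip ks).flatMap fun p => List.replicate p.2 p.1) :=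
    ⟨by rw [hlen, List.length_map], hpos, rfl⟩
  exact ⟨_, hx, (hx.map s).2.2.trans hxb'.symm⟩

theorem IsCorrespondence.map {xb yb : List α} (h : IsCorrespondence x y xb yb) :
    IsCorrespondence (x.map s) (y.map s) (xb.map s) (yb.map s) := by
  obtain ⟨⟨ksx, hx⟩, ⟨ksy, hy⟩, hlen⟩ := h
  exact ⟨⟨ksx, hx.map s⟩, ⟨ksy, hy.map s⟩, by simp [hlen]⟩

theorem IsCorrespondence.exists_of_map {xb' yb' : List β}
    (h : IsCorrespondence (x.map s) (y.map s) xb' yb') : ∃ xb yb, IsCorrespondence x y xb yb := by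
  obtain ⟨⟨ksx, hx⟩, ⟨ksy, hy⟩, hlen⟩ := h
  obtain ⟨xb, hxb, rfl⟩ := hx.exists_of_map s
  obtain ⟨yb, hyb, rfl⟩ := hy.exists_of_map s
  exact ⟨xb, yb, ⟨ksx, hxb⟩, ⟨ksy, hyb⟩, by simpa using hlen⟩

end Expansion

section Dtw

variable {α β : Type*} {d : α → α → ℝ} {d' : β → β → ℝ}

theorem corrCost_nonneg (hd : ∀ u v, 0 ≤ d u v) (xb yb : List α) : 0 ≤ corrCost d xb yb :=
  List.sum_nonneg fun _ hc => by
    obtain ⟨p, -, rfl⟩ := List.mem_map.mp hc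
    exact hd _ _

theorem corrCost_map_le {s : α → β} (hs : ∀ u v, d' (s u) (s v) ≤ d u v) (xb yb : List α) :
    corrCost d' (xb.map s) (yb.map s) ≤ corrCost d xb yb := by
  rw [corrCost, corrCost, List.zip_map, List.map_map]
  exact List.sum_le_sum fun p _ => hs p.1 p.2

/-- If `x` and `y` admit no correspondence, neither do their images, and both sides are the
junk value `sInf ∅ = 0`. -/
theorem dtw_map_le (hd' : ∀ u v, 0 ≤ d' u v) {s : α → β} (hs : ∀ u v, d' (s u) (s v) ≤ d u v)
    (x y : List α) : dtw d' (x.map s) (y.map s) ≤ dtw d x y := by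
  rw [dtw, dtw]
  obtain hempty | ⟨_, xb, yb, hcorr, rfl⟩ :=
    {c | ∃ xb yb, IsCorrespondence x y xb yb ∧ c = corrCost d xb yb}.eq_empty_or_nonempty
  · have hempty' : {c | ∃ xb' yb', IsCorrespondence (x.map s) (y.map s) xb' yb' ∧
        c = corrCost d' xb' yb'} = ∅ := by
      refine Set.eq_empty_of_forall_notMem ?_
      rintro _ ⟨xb', yb', hcorr', -⟩
      obtain ⟨xb, yb, hcorr⟩ := hcorr'.exists_of_map s
      exact hempty.subset ⟨xb, yb, hcorr, rfl⟩
    rw [hempty, hempty']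
  · refine le_csInf ⟨_, xb, yb, hcorr, rfl⟩ ?_
    rintro _ ⟨xb, yb, hcorr, rfl⟩
    refine le_trans ?_ (corrCost_map_le hs xb yb)
    refine csInf_le ?_ ⟨_, _, hcorr.map s, rfl⟩
    exact ⟨0, by rintro _ ⟨xb', yb', -, rfl⟩; exact corrCost_nonneg hd' xb' yb'⟩

end Dtw

theorem stmt9_general {σ : Type*} (T : WSTree σ) (r : ℝ)
    (s : σ → σ) (hs : ∀ l, T.IsSimp r l (s l)) (n : ℕ) (x y : List σ) :
    dtw T.dist (x.map s) (y.map s) ≤ dtw T.dist x y ∧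
    ∀ a : ℝ, 0 < a → dtw T.dist x y ≤ n * r / a →
      dtw T.dist (x.map s) (y.map s) ≤ n * r / a := by
  have hdtw := dtw_map_le T.dist_nonneg (WSTree.dist_simp_le hs) x y
  exact ⟨hdtw, fun _ _ hxy => hdtw.trans hxy⟩

/-- `dtw(s_r(x), s_r(y)) ≤ dtw(x, y)`; consequently if `dtw(x, y) ≤ nr/α` then
`dtw(s_r(x), s_r(y)) ≤ nr/α`. -/
theorem stmt9 {σ : Type*} [Fintype σ] (T : WSTree σ) (r : ℝ) (hr : 1 ≤ r)
    (s : σ → σ) (hs : ∀ l, T.IsSimp r l (s l)) (n : ℕ) (x y : List σ)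
    (hx : x.length = n) (hy : y.length = n) :
    dtw T.dist (x.map s) (y.map s) ≤ dtw T.dist x y ∧
    ∀ a : ℝ, 0 < a → dtw T.dist x y ≤ n * r / a →
      dtw T.dist (x.map s) (y.map s) ≤ n * r / a :=
  stmt9_general T r s hs n x y
end
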